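/- Let P ∈ ℝ^{m×n}[ξ] and Q ∈ ℝ^{m×m}[ξ] with Q nonsingular and Q⁻¹P proper. Suppose (A,B,C,D) with A ∈ ℝ^{d×d} and (Â,B̂,Ĉ,D̂) with Â ∈ ℝ^{d̂×d̂} are both observable realizations of (P,Q). Then d = d̂ and there exists a nonsingular T ∈ ℝ^{d×d} such that Â = TAT⁻¹, B̂ = TB, Ĉ = CT⁻¹ and D̂ = D. -/

import Mathlib

open MeasureTheory Matrix Polynomial
open scoped ComplexOrder

noncomputable section

/-- real matrices of the indicated size -/
abbrev Mat (m n : ℕ) := Matrix (Fin m) (Fin n) ℝ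

/-- A function `u : ℝ → ℝⁿ` is locally square-integrable if it is Lebesgue measurable and
the integral of its square over every compact set is finite. -/
def LocL2 {n : ℕ} (u : ℝ → Fin n → ℝ) : Prop :=
  Measurable u ∧ ∀ K : Set ℝ, IsCompact K → ∀ i : Fin n,
    (∫⁻ t in K, ENNReal.ofReal ((u t i) ^ 2)) < ⊤

/-- the state trajectory `x(t) = e^{A(t−t₀)}x₀ + ∫_{t₀}^{t} e^{A(t−τ)}Bu(τ)dτ` -/
def stateSol {d n : ℕ} (A : Mat d d) (B : Mat d n) (t₀ : ℝ) (x₀ : Fin d → ℝ)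
    (u : ℝ → Fin n → ℝ) (t : ℝ) : Fin d → ℝ :=
  (NormedSpace.expSeries ℝ (Mat d d)).sum ((t - t₀) • A) *ᵥ x₀ +
    ∫ τ in t₀..t, (NormedSpace.expSeries ℝ (Mat d d)).sum ((t - τ) • A) *ᵥ (B *ᵥ u τ)

/-- the output trajectory `y(t) = Cx(t) + Du(t)` -/
def outputSol {d n m : ℕ} (A : Mat d d) (B : Mat d n) (C : Matrix (Fin m) (Fin d) ℝ)
    (D : Matrix (Fin m) (Fin n) ℝ) (t₀ : ℝ) (x₀ : Fin d → ℝ) (u : ℝ → Fin n → ℝ)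
    (t : ℝ) : Fin m → ℝ :=
  C *ᵥ stateSol A B t₀ x₀ u t + D *ᵥ u t

/-- the observability matrix col(C, CA, …, CA^{d−1}) -/
def obsMat {d m : ℕ} (A : Mat d d) (C : Matrix (Fin m) (Fin d) ℝ) :
    Matrix (Fin d × Fin m) (Fin d) ℝ :=
  Matrix.of fun p j => (C * A ^ (p.1 : ℕ)) p.2 j

/-- the substitution ξ ↦ −ξ on real polynomials, as a ring isomorphism -/
def negX : Polynomial ℝ ≃+* Polynomial ℝ where
  toFun p := p.comp (-Polynomial.X)
  invFun p := p.comp (-Polynomial.X)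
  left_inv p := by
    show (p.comp (-Polynomial.X)).comp (-Polynomial.X) = p
    rw [Polynomial.comp_assoc]
    simp
  right_inv p := by
    show (p.comp (-Polynomial.X)).comp (-Polynomial.X) = p
    rw [Polynomial.comp_assoc]
    simp
  map_add' p q := Polynomial.add_comp
  map_mul' p q := Polynomial.mul_comp p q (-Polynomial.X)

/-- the substitution ξ ↦ −ξ on real rational functions -/
def ratNeg : RatFunc ℝ →+* RatFunc ℝ :=
  RatFunc.mapRingHom (negX : Polynomial ℝ →+* Polynomial ℝ)
    (by
      intro p hp
      have hp0 : p ≠ 0 := nonZeroDivisors.ne_zero hp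
      refine Submonoid.mem_comap.mpr (mem_nonZeroDivisors_of_ne_zero ?_)
      intro h
      exact hp0 (negX.injective (by simpa using h)))

/-- embed real matrices into matrices of rational functions -/
def ratOf {m n : Type*} (M : Matrix m n ℝ) : Matrix m n (RatFunc ℝ) :=
  M.map (algebraMap ℝ (RatFunc ℝ))

/-- embed polynomial matrices into matrices of rational functions -/
def ratM {m n : Type*} (M : Matrix m n (Polynomial ℝ)) : Matrix m n (RatFunc ℝ) :=
  M.map (algebraMap (Polynomial ℝ) (RatFunc ℝ))

/-- the rational matrix `M(−ξ)ᵀ` -/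
def paraT {m n : Type*} (M : Matrix m n (RatFunc ℝ)) : Matrix n m (RatFunc ℝ) :=
  (M.map ratNeg)ᵀ

/-- the transfer function `H = D + C (ξI − A)⁻¹ B` -/
def transferFn {d n m : ℕ} (A : Matrix (Fin d) (Fin d) ℝ) (B : Matrix (Fin d) (Fin n) ℝ)
    (C : Matrix (Fin m) (Fin d) ℝ) (D : Matrix (Fin m) (Fin n) ℝ) :
    Matrix (Fin m) (Fin n) (RatFunc ℝ) :=
  ratOf D + ratOf C *
    (Matrix.diagonal (fun _ => (RatFunc.X : RatFunc ℝ)) - ratOf A)⁻¹ * ratOf B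

/-- evaluation of a real rational function at a complex point (junk value at poles) -/
def evalRat (f : RatFunc ℝ) (z : ℂ) : ℂ := RatFunc.eval (algebraMap ℝ ℂ) z f

/-- `Z` is a spectral factor of `Φ`: `Z(−ξ)ᵀZ(ξ) = Φ(ξ)`, no entry of `Z` has a pole in the
open right half-plane, and `Z(λ)` has full row rank for every `λ` there -/
def IsSpectralFactor {q k : ℕ} (Z : Matrix (Fin q) (Fin k) (RatFunc ℝ))
    (Φ : Matrix (Fin k) (Fin k) (RatFunc ℝ)) : Prop :=
  paraT Z * Z = Φ ∧
  (∀ (i : Fin q) (j : Fin k) (z : ℂ), 0 < z.re → Polynomial.aeval z ((Z i j).denom) ≠ 0) ∧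
  (∀ z : ℂ, 0 < z.re → (Matrix.of fun i j => evalRat (Z i j) z).rank = q)

/-- the rational matrix `W + L(ξI − A)⁻¹B` -/
def Zfac {d n q : ℕ} (A : Matrix (Fin d) (Fin d) ℝ) (B : Matrix (Fin d) (Fin n) ℝ)
    (L : Matrix (Fin q) (Fin d) ℝ) (W : Matrix (Fin q) (Fin n) ℝ) :
    Matrix (Fin q) (Fin n) (RatFunc ℝ) :=
  ratOf W + ratOf L *
    (Matrix.diagonal (fun _ => (RatFunc.X : RatFunc ℝ)) - ratOf A)⁻¹ * ratOf B

/-- a real rational function is proper if its numerator degree is at most its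
denominator degree -/
def ratProper (f : RatFunc ℝ) : Prop := f.num.degree ≤ f.denom.degree

/-- the limit of a rational function at infinity: the ratio of the leading coefficients when
the degrees agree, and `0` otherwise (in particular when the numerator degree is smaller) -/
def ratLimInf (f : RatFunc ℝ) : ℝ :=
  if f.num.degree = f.denom.degree then f.num.leadingCoeff / f.denom.leadingCoeff else 0

/-- a rational matrix is proper if every entry is proper -/
def ProperM {m n : Type*} (M : Matrix m n (RatFunc ℝ)) : Prop := ∀ i j, ratProper (M i j)

/-- the entrywise limit at infinity of a rational matrix -/
def limM {m n : Type*} (M : Matrix m n (RatFunc ℝ)) : Matrix m n ℝ :=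
  Matrix.of fun i j => ratLimInf (M i j)

/-- `(A,B,C,D)` is an observable realization of the polynomial matrix pair `(P,Q)` -/
def ObsRealization {d n m : ℕ} (A : Matrix (Fin d) (Fin d) ℝ) (B : Matrix (Fin d) (Fin n) ℝ)
    (C : Matrix (Fin m) (Fin d) ℝ) (D : Matrix (Fin m) (Fin n) ℝ)
    (P : Matrix (Fin m) (Fin n) (Polynomial ℝ)) (Q : Matrix (Fin m) (Fin m) (Polynomial ℝ)) :
    Prop :=
  (obsMat A C).rank = d ∧
  ∃ (M : Matrix (Fin m) (Fin m) (Polynomial ℝ)) (N : Matrix (Fin m) (Fin d) (Polynomial ℝ))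
    (U : Matrix (Fin d) (Fin m) (Polynomial ℝ)) (V : Matrix (Fin d) (Fin d) (Polynomial ℝ))
    (E : Matrix (Fin d) (Fin n) (Polynomial ℝ)) (F : Matrix (Fin d) (Fin m) (Polynomial ℝ)),
    (∃ c : ℝ, c ≠ 0 ∧ (Matrix.fromBlocks M N U V).det = Polynomial.C c) ∧
    M * D.map Polynomial.C + N * B.map Polynomial.C = P ∧
    M = Q ∧
    M * C.map Polynomial.C =
      N * ((Polynomial.X : Polynomial ℝ) • (1 : Matrix (Fin d) (Fin d) (Polynomial ℝ)) -
        A.map Polynomial.C) ∧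
    U * D.map Polynomial.C + V * B.map Polynomial.C = E ∧
    U = -F ∧
    V * ((Polynomial.X : Polynomial ℝ) • (1 : Matrix (Fin d) (Fin d) (Polynomial ℝ)) -
        A.map Polynomial.C) - U * C.map Polynomial.C = 1

/-!
Over `ℝ(ξ)` put `G = C (ξI - A)⁻¹`. Its entries are strictly proper (valuation `< 1` at
infinity), and a strictly proper polynomial is zero. Unimodularity of `[[Q, N], [U, V]]` yields
polynomial `K`, `L` with `(K + G L) Q = I`. Hence a strictly proper `X` with `Q X` polynomial
is `G T` for a constant `T`: dividing `L (Q X)` by `ξI - A` on the left splits `X` into a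
polynomial plus `G` times the remainder, and the polynomial part must vanish. The two
realizations therefore satisfy `Ĝ = G T₁` and `G = Ĝ T₂`. Comparing expansions at infinity,
`G Z = Ĝ Ẑ` forces `C Aᵏ Z = Ĉ Âᵏ Ẑ` for all `k`, so observability gives `T₁ T₂ = I` and
`T₂ T₁ = I`. Both transfer functions equal `(K + G L) P`, and the same comparison applied to
`D + G B = D̂ + Ĝ B̂` gives `D̂ = D` and the remaining relations.
-/

theorem Valuation.lt_one_of_diagonal_sub_mul_eq_one {F Γ₀ ι : Type*} [Ring F]
    [LinearOrderedCommGroupWithZero Γ₀] (v : Valuation F Γ₀) [Fintype ι] [DecidableEq ι]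
    {x : F} (hx : 1 < v x) {A R : Matrix ι ι F} (hA : ∀ i j, v (A i j) ≤ 1)
    (hR : (diagonal (fun _ => x) - A) * R = 1) (i j : ι) : v (R i j) < 1 := by
  -- An entry of maximal valuation `μ ≥ 1` would satisfy `v x * μ ≤ max 1 μ = μ`.
  by_contra! h
  obtain ⟨⟨i₀, j₀⟩, -, hmax⟩ := Finset.exists_max_image Finset.univ
    (fun p : ι × ι => v (R p.1 p.2)) ⟨(i, j), Finset.mem_univ _⟩
  have hμ : 1 ≤ v (R i₀ j₀) := h.trans (hmax (i, j) (Finset.mem_univ _))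
  have hxR : x • R = 1 + A * R := by
    rw [Matrix.smul_eq_diagonal_mul, ← hR, Matrix.sub_mul, sub_add_cancel]
  have hentry : x * R i₀ j₀ = (1 : Matrix ι ι F) i₀ j₀ + ∑ k, A i₀ k * R k j₀ := by
    simpa [Matrix.mul_apply] using congr_fun₂ hxR i₀ j₀
  have hone : v ((1 : Matrix ι ι F) i₀ j₀) ≤ v (R i₀ j₀) := by
    rw [Matrix.one_apply]
    split_ifs <;> simp [hμ]
  have hsum : v (∑ k, A i₀ k * R k j₀) ≤ v (R i₀ j₀) := by
    refine v.map_sum_le fun k _ => ?_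
    rw [map_mul]
    exact mul_le_of_le_one_of_le (hA i₀ k) (hmax (k, j₀) (Finset.mem_univ _))
  have : v (R i₀ j₀) < v (R i₀ j₀) := calc
    v (R i₀ j₀) < v x * v (R i₀ j₀) := lt_mul_of_one_lt_left (zero_lt_one.trans_le hμ) hx
    _ = v ((1 : Matrix ι ι F) i₀ j₀ + ∑ k, A i₀ k * R k j₀) := by rw [← map_mul, hentry]
    _ ≤ v (R i₀ j₀) := (v.map_add _ _).trans (max_le hone hsum)
  exact this.false

lemma X_smul_one_sub_map_C {R ι : Type*} [CommRing R] [Fintype ι] [DecidableEq ι]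
    (A : Matrix ι ι R) : (X : R[X]) • (1 : Matrix ι ι R[X]) - A.map C = A.charmatrix := by
  rw [Matrix.charmatrix, Matrix.scalar_apply, ← Matrix.smul_one_eq_diagonal]
  rfl

lemma exists_smul_map_C_eq_charmatrix_mul_add {R ι κ : Type*} [CommRing R] [Fintype ι]
    [DecidableEq ι] (A : Matrix ι ι R) (p : R[X]) (Z₀ : Matrix ι κ R) :
    ∃ (S : Matrix ι κ R[X]) (Z₁ : Matrix ι κ R), p • Z₀.map C = A.charmatrix * S + Z₁.map C := by
  induction p using Polynomial.induction_on generalizing Z₀ with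
  | C a => exact ⟨0, a • Z₀, by ext; simp⟩
  | add p q hp hq =>
    obtain ⟨S, Z₁, hS⟩ := hp Z₀
    obtain ⟨S', Z₁', hS'⟩ := hq Z₀
    refine ⟨S + S', Z₁ + Z₁', ?_⟩
    rw [add_smul, hS, hS', Matrix.mul_add, Matrix.map_add _ (map_add C)]
    abel
  | monomial k a ih =>
    have hX : (X : R[X]) • Z₀.map C = A.charmatrix * Z₀.map C + (A * Z₀).map C := by
      rw [← X_smul_one_sub_map_C, Matrix.sub_mul, Matrix.smul_mul, Matrix.one_mul,
        Matrix.map_mul, sub_add_cancel]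
    obtain ⟨S, Z₁, hS⟩ := ih (A * Z₀)
    refine ⟨(C a * X ^ k) • Z₀.map C + S, Z₁, ?_⟩
    rw [pow_succ, ← mul_assoc, mul_smul, hX, smul_add, hS, Matrix.mul_add, Matrix.mul_smul,
      add_assoc]

lemma exists_eq_charmatrix_mul_add {R ι κ : Type*} [CommRing R] [Fintype ι] [DecidableEq ι]
    [Finite κ] (A : Matrix ι ι R) (Z : Matrix ι κ R[X]) :
    ∃ (S : Matrix ι κ R[X]) (Z₀ : Matrix ι κ R), Z = A.charmatrix * S + Z₀.map C := by
  classical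
  induction Z using Matrix.induction_on' with
  | h_zero => exact ⟨0, 0, by simp⟩
  | h_add Z Z' hZ hZ' =>
    obtain ⟨S, Z₀, hS⟩ := hZ
    obtain ⟨S', Z₀', hS'⟩ := hZ'
    refine ⟨S + S', Z₀ + Z₀', ?_⟩
    rw [hS, hS', Matrix.mul_add, Matrix.map_add _ (map_add C)]
    abel
  | h_std_basis i j p =>
    obtain ⟨S, Z₁, hS⟩ := exists_smul_map_C_eq_charmatrix_mul_add A p (Matrix.single i j 1)
    refine ⟨S, Z₁, ?_⟩
    rw [← hS]
    ext i' j' : 2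
    simp [Matrix.single_apply]

lemma exists_mul_sub_mul_eq_one_of_isUnit_det_fromBlocks {R m d : Type*} [CommRing R]
    [Fintype m] [Fintype d] [DecidableEq m] [DecidableEq d] {Q : Matrix m m R}
    {N : Matrix m d R} {U : Matrix d m R} {V : Matrix d d R} {X : Matrix m d R}
    {Y : Matrix d d R} (hΦ : IsUnit (fromBlocks Q N U V).det) (hX : Q * X = N * Y)
    (hY : V * Y - U * X = 1) :
    ∃ (K : Matrix m m R) (L : Matrix d m R), K * Q - X * U = 1 ∧ L * Q + Y * U = 0 := by
  set Ψ := (fromBlocks Q N U V)⁻¹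
  have hΨ : fromBlocks Q N U V * Ψ = 1 := Matrix.mul_nonsing_inv _ hΦ
  rw [← fromBlocks_toBlocks Ψ, fromBlocks_multiply, ← fromBlocks_one, fromBlocks_inj] at hΨ
  obtain ⟨h11, -, h21, -⟩ := hΨ
  -- `[[Ψ₁₁, -X], [Ψ₂₁, Y]]` is a right inverse of `fromBlocks Q N U V`, hence also a left one.
  have hright : fromBlocks Q N U V * fromBlocks Ψ.toBlocks₁₁ (-X) Ψ.toBlocks₂₁ Y = 1 := by
    rw [fromBlocks_multiply, ← fromBlocks_one, fromBlocks_inj, Matrix.mul_neg, Matrix.mul_neg,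
      hX, ← hY]
    exact ⟨h11, by abel, h21, by abel⟩
  rw [mul_eq_one_comm, fromBlocks_multiply, ← fromBlocks_one, fromBlocks_inj] at hright
  obtain ⟨h11', -, h21', -⟩ := hright
  exact ⟨Ψ.toBlocks₁₁, Ψ.toBlocks₂₁, by rwa [Matrix.neg_mul, ← sub_eq_add_neg] at h11', h21'⟩

lemma Matrix.eq_zero_of_rank_eq_zero {K m n : Type*} [Field K] [Fintype n] [DecidableEq n]
    {M : Matrix m n K} (h : M.rank = 0) : M = 0 := by
  rw [Matrix.rank, Submodule.finrank_eq_zero, LinearMap.range_eq_bot] at h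
  exact Matrix.toLin'.map_eq_zero_iff.mp h

lemma Matrix.le_of_mul_eq_one {K : Type*} [Field K] {d e : ℕ} {T : Matrix (Fin d) (Fin e) K}
    {T' : Matrix (Fin e) (Fin d) K} (h : T * T' = 1) : d ≤ e := by
  calc d = (1 : Matrix (Fin d) (Fin d) K).rank := by rw [Matrix.rank_one, Fintype.card_fin]
    _ ≤ T.rank := by rw [← h]; exact Matrix.rank_mul_le_left T T'
    _ ≤ e := Matrix.rank_le_width T

section RationalEmbedding

variable {ι κ μ : Type*}

lemma ratM_mul [Fintype κ] (M : Matrix ι κ ℝ[X]) (N : Matrix κ μ ℝ[X]) :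
    ratM (M * N) = ratM M * ratM N :=
  Matrix.map_mul

lemma ratM_add (M N : Matrix ι κ ℝ[X]) : ratM (M + N) = ratM M + ratM N :=
  Matrix.map_add _ (map_add _) M N

lemma ratM_sub (M N : Matrix ι κ ℝ[X]) : ratM (M - N) = ratM M - ratM N :=
  Matrix.map_sub _ (map_sub _) M N

lemma ratM_neg (M : Matrix ι κ ℝ[X]) : ratM (-M) = -ratM M :=
  Matrix.map_neg _ (map_neg _) M

lemma ratM_one [Fintype ι] [DecidableEq ι] : ratM (1 : Matrix ι ι ℝ[X]) = 1 :=
  Matrix.map_one _ (map_zero _) (map_one _)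

lemma ratOf_eq_ratM (M : Matrix ι κ ℝ) : ratOf M = ratM (M.map C) := by
  ext i j
  simp [ratOf, ratM, RatFunc.algebraMap_C, RatFunc.algebraMap_eq_C]

lemma ratOf_mul [Fintype κ] (M : Matrix ι κ ℝ) (N : Matrix κ μ ℝ) :
    ratOf (M * N) = ratOf M * ratOf N :=
  Matrix.map_mul

lemma ratOf_sub (M N : Matrix ι κ ℝ) : ratOf (M - N) = ratOf M - ratOf N :=
  Matrix.map_sub _ (map_sub _) M N

lemma ratOf_one [Fintype ι] [DecidableEq ι] : ratOf (1 : Matrix ι ι ℝ) = 1 :=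
  Matrix.map_one _ (map_zero _) (map_one _)

end RationalEmbedding

section Resolvent

variable {ι κ μ : Type*} [Fintype ι] [DecidableEq ι]

lemma ratM_charmatrix (A : Matrix ι ι ℝ) :
    ratM A.charmatrix = diagonal (fun _ => RatFunc.X) - ratOf A := by
  ext i j
  rcases eq_or_ne i j with rfl | h <;>
    simp [ratM, ratOf, *, RatFunc.algebraMap_C, RatFunc.algebraMap_eq_C]

lemma isUnit_det_ratM_charmatrix (A : Matrix ι ι ℝ) : IsUnit (ratM A.charmatrix).det := by
  rw [ratM, ← RingHom.mapMatrix_apply, ← RingHom.map_det, isUnit_iff_ne_zero,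
    map_ne_zero_iff _ (RatFunc.algebraMap_injective ℝ)]
  exact A.charpoly_monic.ne_zero

def obsResolvent (A : Matrix ι ι ℝ) (C : Matrix κ ι ℝ) : Matrix κ ι (RatFunc ℝ) :=
  ratOf C * (ratM A.charmatrix)⁻¹

lemma transferFn_eq_add_obsResolvent_mul {d n m : ℕ} (A : Matrix (Fin d) (Fin d) ℝ)
    (B : Matrix (Fin d) (Fin n) ℝ) (C : Matrix (Fin m) (Fin d) ℝ) (D : Matrix (Fin m) (Fin n) ℝ) :
    transferFn A B C D = ratOf D + obsResolvent A C * ratOf B := by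
  rw [transferFn, obsResolvent, ratM_charmatrix]

lemma obsResolvent_mul_ratM_charmatrix (A : Matrix ι ι ℝ) (C : Matrix κ ι ℝ) :
    obsResolvent A C * ratM A.charmatrix = ratOf C := by
  rw [obsResolvent, Matrix.mul_assoc, Matrix.nonsing_inv_mul _ (isUnit_det_ratM_charmatrix A),
    Matrix.mul_one]

lemma obsResolvent_mul_ratOf_mul (A : Matrix ι ι ℝ) (C : Matrix κ ι ℝ) (Z : Matrix ι μ ℝ) :
    obsResolvent A C * ratOf (A * Z) =
      (RatFunc.X : RatFunc ℝ) • (obsResolvent A C * ratOf Z) - ratOf (C * Z) := by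
  have hA : ratOf A = (RatFunc.X : RatFunc ℝ) • 1 - ratM A.charmatrix := by
    rw [ratM_charmatrix, Matrix.smul_one_eq_diagonal, sub_sub_cancel]
  rw [ratOf_mul, hA, ← Matrix.mul_assoc, Matrix.mul_sub, obsResolvent_mul_ratM_charmatrix,
    Matrix.mul_smul, Matrix.mul_one, Matrix.sub_mul, Matrix.smul_mul, ratOf_mul]

end Resolvent

section StrictlyProper

variable {ι κ μ : Type*}

open Classical in
/-- `v∞ f < 1` means `deg (num f) < deg (denom f)`, or `f = 0`. -/
def IsStrictlyProper (M : Matrix ι κ (RatFunc ℝ)) : Prop :=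
  ∀ i j, RatFunc.inftyValuation ℝ (M i j) < 1

open Classical in
lemma inftyValuation_ratOf_le_one (M : Matrix ι κ ℝ) (i : ι) (j : κ) :
    RatFunc.inftyValuation ℝ (ratOf M i j) ≤ 1 :=
  Valuation.IsTrivialOn.valuation_algebraMap_le_one (A := ℝ) _ _

lemma IsStrictlyProper.ratOf_mul [Fintype ι] {S : Matrix ι κ (RatFunc ℝ)}
    (hS : IsStrictlyProper S) (M : Matrix μ ι ℝ) : IsStrictlyProper (ratOf M * S) := by
  intro i j
  refine Valuation.map_sum_lt _ one_ne_zero fun k _ => ?_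
  rw [map_mul]
  exact (mul_le_of_le_one_left' (inftyValuation_ratOf_le_one M i k)).trans_lt (hS k j)

lemma IsStrictlyProper.mul_ratOf [Fintype κ] {S : Matrix ι κ (RatFunc ℝ)}
    (hS : IsStrictlyProper S) (M : Matrix κ μ ℝ) : IsStrictlyProper (S * ratOf M) := by
  intro i j
  refine Valuation.map_sum_lt _ one_ne_zero fun k _ => ?_
  rw [map_mul]
  exact (mul_le_of_le_one_right' (inftyValuation_ratOf_le_one M k j)).trans_lt (hS i k)

lemma IsStrictlyProper.sub {S S' : Matrix ι κ (RatFunc ℝ)} (hS : IsStrictlyProper S)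
    (hS' : IsStrictlyProper S') : IsStrictlyProper (S - S') :=
  fun i j => Valuation.map_sub_lt _ (hS i j) (hS' i j)

lemma eq_zero_of_isStrictlyProper_ratM {M : Matrix ι κ ℝ[X]} (h : IsStrictlyProper (ratM M)) :
    M = 0 := by
  classical
  refine Matrix.ext fun i j => ?_
  by_contra hM
  have := h i j
  rw [ratM, Matrix.map_apply, RatFunc.inftyValuation_apply,
    RatFunc.inftyValuation.polynomial _ hM] at this
  exact this.not_ge (by rw [← WithZero.exp_zero, WithZero.exp_le_exp]; positivity)

lemma eq_zero_of_isStrictlyProper_ratOf {M : Matrix ι κ ℝ} (h : IsStrictlyProper (ratOf M)) :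
    M = 0 := by
  rw [ratOf_eq_ratM] at h
  ext i j
  simpa using congr_fun₂ (eq_zero_of_isStrictlyProper_ratM h) i j

variable [Fintype ι] [DecidableEq ι]

lemma isStrictlyProper_inv_ratM_charmatrix (A : Matrix ι ι ℝ) :
    IsStrictlyProper (ratM A.charmatrix)⁻¹ := by
  intro i j
  refine Valuation.lt_one_of_diagonal_sub_mul_eq_one _ (x := RatFunc.X) (A := ratOf A) ?_
    (inftyValuation_ratOf_le_one A) ?_ i j
  · rw [RatFunc.inftyValuation.X, ← WithZero.exp_zero, WithZero.exp_lt_exp]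
    exact one_pos
  · rw [← ratM_charmatrix, Matrix.mul_nonsing_inv _ (isUnit_det_ratM_charmatrix A)]

lemma isStrictlyProper_obsResolvent (A : Matrix ι ι ℝ) (C : Matrix κ ι ℝ) :
    IsStrictlyProper (obsResolvent A C) :=
  (isStrictlyProper_inv_ratM_charmatrix A).ratOf_mul C

end StrictlyProper

section Markov

variable {ι ι' κ μ : Type*} [Fintype ι] [DecidableEq ι] [Fintype ι'] [DecidableEq ι']
  {A : Matrix ι ι ℝ} {C : Matrix κ ι ℝ} {A' : Matrix ι' ι' ℝ} {C' : Matrix κ ι' ℝ}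
  {Z : Matrix ι μ ℝ} {Z' : Matrix ι' μ ℝ}

lemma mul_eq_of_obsResolvent_mul_ratOf_eq
    (h : obsResolvent A C * ratOf Z = obsResolvent A' C' * ratOf Z') : C * Z = C' * Z' := by
  have hdiff : ratOf (C' * Z' - C * Z) =
      obsResolvent A C * ratOf (A * Z) - obsResolvent A' C' * ratOf (A' * Z') := by
    rw [obsResolvent_mul_ratOf_mul, obsResolvent_mul_ratOf_mul, h, ratOf_sub]
    abel
  have hzero := eq_zero_of_isStrictlyProper_ratOf (hdiff ▸
    ((isStrictlyProper_obsResolvent A C).mul_ratOf _).sub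
      ((isStrictlyProper_obsResolvent A' C').mul_ratOf _))
  exact (sub_eq_zero.mp hzero).symm

lemma obsResolvent_mul_ratOf_mul_eq
    (h : obsResolvent A C * ratOf Z = obsResolvent A' C' * ratOf Z') :
    obsResolvent A C * ratOf (A * Z) = obsResolvent A' C' * ratOf (A' * Z') := by
  rw [obsResolvent_mul_ratOf_mul, obsResolvent_mul_ratOf_mul, h,
    mul_eq_of_obsResolvent_mul_ratOf_eq h]

lemma mul_pow_mul_eq_of_obsResolvent_mul_ratOf_eq
    (h : obsResolvent A C * ratOf Z = obsResolvent A' C' * ratOf Z') (k : ℕ) :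
    C * A ^ k * Z = C' * A' ^ k * Z' := by
  induction k generalizing Z Z' with
  | zero => simpa using mul_eq_of_obsResolvent_mul_ratOf_eq h
  | succ k ih =>
    simpa only [pow_succ, Matrix.mul_assoc] using ih (obsResolvent_mul_ratOf_mul_eq h)

end Markov

section Observability

variable {d m : ℕ} {A : Mat d d} {C : Matrix (Fin m) (Fin d) ℝ}

lemma eq_zero_of_rank_obsMat_eq {q : ℕ} (hobs : (obsMat A C).rank = d)
    {Z : Matrix (Fin d) (Fin q) ℝ} (hZ : ∀ k, C * A ^ k * Z = 0) : Z = 0 := by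
  have hOZ : obsMat A C * Z = 0 := by
    ext ⟨k, i⟩ j
    exact congr_fun₂ (hZ k) i j
  have hrank := Matrix.rank_add_rank_le_card_of_mul_eq_zero hOZ
  rw [hobs, Fintype.card_fin] at hrank
  exact Matrix.eq_zero_of_rank_eq_zero (by omega)

lemma eq_of_obsResolvent_mul_ratOf_eq {q : ℕ} (hobs : (obsMat A C).rank = d)
    {Z Z' : Matrix (Fin d) (Fin q) ℝ}
    (h : obsResolvent A C * ratOf Z = obsResolvent A C * ratOf Z') : Z = Z' := by
  refine sub_eq_zero.mp (eq_zero_of_rank_obsMat_eq hobs fun k => ?_)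
  rw [Matrix.mul_sub, mul_pow_mul_eq_of_obsResolvent_mul_ratOf_eq h, sub_self]

end Observability

section Realization

variable {ι κ μ : Type*} [Fintype ι] [DecidableEq ι] [Fintype κ]
  {A : Matrix ι ι ℝ} {C : Matrix κ ι ℝ}

lemma ratM_mul_obsResolvent {Q : Matrix κ κ ℝ[X]} {N : Matrix κ ι ℝ[X]}
    (hN : Q * C.map Polynomial.C = N * A.charmatrix) : ratM Q * obsResolvent A C = ratM N := by
  rw [obsResolvent, ratOf_eq_ratM, ← Matrix.mul_assoc, ← ratM_mul, hN, ratM_mul, Matrix.mul_assoc,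
    Matrix.mul_nonsing_inv _ (isUnit_det_ratM_charmatrix A), Matrix.mul_one]

lemma exists_eq_obsResolvent_mul_ratOf [DecidableEq κ] [Fintype μ] {Q K : Matrix κ κ ℝ[X]}
    {L : Matrix ι κ ℝ[X]} (hinv : (ratM K + obsResolvent A C * ratM L) * ratM Q = 1)
    {X : Matrix κ μ (RatFunc ℝ)}
    (hX : IsStrictlyProper X) {N : Matrix κ μ ℝ[X]} (hQX : ratM Q * X = ratM N) :
    ∃ T : Matrix ι μ ℝ, X = obsResolvent A C * ratOf T := by
  obtain ⟨S, T, hLN⟩ := exists_eq_charmatrix_mul_add A (L * N)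
  refine ⟨T, ?_⟩
  have hsplit : X = ratM (K * N + C.map Polynomial.C * S) + obsResolvent A C * ratOf T := calc
    X = (ratM K + obsResolvent A C * ratM L) * ratM Q * X := by rw [hinv, Matrix.one_mul]
    _ = ratM K * ratM N + obsResolvent A C * ratM (L * N) := by
      rw [Matrix.mul_assoc, hQX, Matrix.add_mul, Matrix.mul_assoc, ratM_mul L]
    _ = _ := by
      rw [hLN, ratM_add, ratM_mul, Matrix.mul_add, ← Matrix.mul_assoc,
        obsResolvent_mul_ratM_charmatrix, ← ratOf_eq_ratM T, ratM_add, ratM_mul, ratM_mul,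
        ← ratOf_eq_ratM C, add_assoc]
  have hpoly : K * N + C.map Polynomial.C * S = 0 := by
    refine eq_zero_of_isStrictlyProper_ratM ?_
    rw [eq_sub_of_add_eq hsplit.symm]
    exact hX.sub ((isStrictlyProper_obsResolvent A C).mul_ratOf T)
  rwa [hpoly, ratM, Matrix.map_zero _ (map_zero _), zero_add] at hsplit

end Realization

namespace ObsRealization

variable {d d' n m : ℕ} {A : Mat d d} {B : Matrix (Fin d) (Fin n) ℝ}
  {C : Matrix (Fin m) (Fin d) ℝ} {D : Matrix (Fin m) (Fin n) ℝ} {A' : Mat d' d'}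
  {B' : Matrix (Fin d') (Fin n) ℝ}
  {C' : Matrix (Fin m) (Fin d') ℝ} {D' : Matrix (Fin m) (Fin n) ℝ}
  {P : Matrix (Fin m) (Fin n) ℝ[X]} {Q : Matrix (Fin m) (Fin m) ℝ[X]}

lemma exists_mul_obsResolvent (h : ObsRealization A B C D P Q) :
    ∃ N, ratM Q * obsResolvent A C = ratM N := by
  obtain ⟨-, M, N, -, -, -, -, -, -, rfl, hN, -⟩ := h
  rw [X_smul_one_sub_map_C] at hN
  exact ⟨N, ratM_mul_obsResolvent hN⟩

lemma mul_transferFn (h : ObsRealization A B C D P Q) : ratM Q * transferFn A B C D = ratM P := by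
  obtain ⟨-, M, N, -, -, -, -, -, hP, rfl, hN, -⟩ := h
  rw [X_smul_one_sub_map_C] at hN
  rw [transferFn_eq_add_obsResolvent_mul, Matrix.mul_add, ← Matrix.mul_assoc,
    ratM_mul_obsResolvent hN, ratOf_eq_ratM,
    ratOf_eq_ratM, ← ratM_mul, ← ratM_mul, ← ratM_add, hP]

lemma exists_left_inv (h : ObsRealization A B C D P Q) :
    ∃ (K : Matrix (Fin m) (Fin m) ℝ[X]) (L : Matrix (Fin d) (Fin m) ℝ[X]),
      (ratM K + obsResolvent A C * ratM L) * ratM Q = 1 := by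
  obtain ⟨-, M, N, U, V, -, -, ⟨c, hc, hdet⟩, -, rfl, hN, -, -, hV⟩ := h
  rw [X_smul_one_sub_map_C] at hN hV
  obtain ⟨K, L, hK, hL⟩ := exists_mul_sub_mul_eq_one_of_isUnit_det_fromBlocks
    (by rw [hdet]; exact isUnit_C.mpr hc.isUnit) hN hV
  refine ⟨K, L, ?_⟩
  have hU : ratM U = -((ratM A.charmatrix)⁻¹ * ratM (L * M)) := calc
    ratM U = ((ratM A.charmatrix)⁻¹ * ratM A.charmatrix) * ratM U := by
      rw [Matrix.nonsing_inv_mul _ (isUnit_det_ratM_charmatrix A), Matrix.one_mul]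
    _ = _ := by
      rw [Matrix.mul_assoc, ← ratM_mul, eq_neg_of_add_eq_zero_right hL, ratM_neg, Matrix.mul_neg]
  calc (ratM K + obsResolvent A C * ratM L) * ratM M
      = ratM K * ratM M - ratOf C * ratM U := by
        rw [hU, Matrix.mul_neg, sub_neg_eq_add, Matrix.add_mul, obsResolvent, ratM_mul L M]
        simp only [Matrix.mul_assoc]
    _ = ratM (K * M - C.map Polynomial.C * U) := by
        rw [ratM_sub, ratM_mul, ratM_mul, ratOf_eq_ratM]
    _ = 1 := by rw [hK, ratM_one]

lemma exists_obsResolvent_eq (h : ObsRealization A B C D P Q)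
    (h' : ObsRealization A' B' C' D' P Q) :
    ∃ T : Matrix (Fin d) (Fin d') ℝ, obsResolvent A' C' = obsResolvent A C * ratOf T := by
  obtain ⟨K, L, hinv⟩ := h.exists_left_inv
  obtain ⟨N, hN⟩ := h'.exists_mul_obsResolvent
  exact exists_eq_obsResolvent_mul_ratOf hinv (isStrictlyProper_obsResolvent A' C') hN

lemma transferFn_eq (h : ObsRealization A B C D P Q)
    (h' : ObsRealization A' B' C' D' P Q) : transferFn A B C D = transferFn A' B' C' D' := by
  obtain ⟨K, L, hinv⟩ := h.exists_left_inv
  calc transferFn A B C D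
      = (ratM K + obsResolvent A C * ratM L) * (ratM Q * transferFn A B C D) := by
        rw [← Matrix.mul_assoc, hinv, Matrix.one_mul]
    _ = (ratM K + obsResolvent A C * ratM L) * (ratM Q * transferFn A' B' C' D') := by
        rw [h.mul_transferFn, h'.mul_transferFn]
    _ = transferFn A' B' C' D' := by rw [← Matrix.mul_assoc, hinv, Matrix.one_mul]

end ObsRealization

lemma eq_and_obsResolvent_mul_eq_of_transferFn_eq {d d' n m : ℕ} {A : Mat d d}
    {B : Matrix (Fin d) (Fin n) ℝ} {C : Matrix (Fin m) (Fin d) ℝ} {D : Matrix (Fin m) (Fin n) ℝ}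
    {A' : Mat d' d'} {B' : Matrix (Fin d') (Fin n) ℝ} {C' : Matrix (Fin m) (Fin d') ℝ}
    {D' : Matrix (Fin m) (Fin n) ℝ} (h : transferFn A B C D = transferFn A' B' C' D') :
    D = D' ∧ obsResolvent A C * ratOf B = obsResolvent A' C' * ratOf B' := by
  rw [transferFn_eq_add_obsResolvent_mul, transferFn_eq_add_obsResolvent_mul] at h
  have hD : ratOf (D' - D) = obsResolvent A C * ratOf B - obsResolvent A' C' * ratOf B' := by
    rw [ratOf_sub, sub_eq_sub_iff_add_eq_add, ← h, add_comm]
  have hDD : D' - D = 0 := eq_zero_of_isStrictlyProper_ratOf (hD ▸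
    ((isStrictlyProper_obsResolvent A C).mul_ratOf B).sub
      ((isStrictlyProper_obsResolvent A' C').mul_ratOf B'))
  obtain rfl : D = D' := (sub_eq_zero.mp hDD).symm
  exact ⟨rfl, add_left_cancel h⟩

theorem statement17_general {d dh n m : ℕ}
    (A : Mat d d) (B : Mat d n) (C : Matrix (Fin m) (Fin d) ℝ) (D : Matrix (Fin m) (Fin n) ℝ)
    (Ah : Mat dh dh) (Bh : Matrix (Fin dh) (Fin n) ℝ) (Ch : Matrix (Fin m) (Fin dh) ℝ)
    (Dh : Matrix (Fin m) (Fin n) ℝ)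
    (P : Matrix (Fin m) (Fin n) (Polynomial ℝ)) (Q : Matrix (Fin m) (Fin m) (Polynomial ℝ))
    (h1 : ObsRealization A B C D P Q) (h2 : ObsRealization Ah Bh Ch Dh P Q) :
    ∃ (h : d = dh) (T : Mat d d), IsUnit T.det ∧
      Ah.submatrix (Fin.cast h) (Fin.cast h) * T = T * A ∧
      Bh.submatrix (Fin.cast h) id = T * B ∧
      Ch.submatrix id (Fin.cast h) * T = C ∧
      Dh = D := by
  obtain ⟨T₁, hT₁⟩ := h1.exists_obsResolvent_eq h2
  obtain ⟨T₂, hT₂⟩ := h2.exists_obsResolvent_eq h1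
  have hT₁₂ : T₁ * T₂ = 1 := eq_of_obsResolvent_mul_ratOf_eq h1.1 (by
    rw [ratOf_mul, ratOf_one, Matrix.mul_one, ← Matrix.mul_assoc, ← hT₁, ← hT₂])
  have hT₂₁ : T₂ * T₁ = 1 := eq_of_obsResolvent_mul_ratOf_eq h2.1 (by
    rw [ratOf_mul, ratOf_one, Matrix.mul_one, ← Matrix.mul_assoc, ← hT₂, ← hT₁])
  obtain rfl : d = dh := le_antisymm (Matrix.le_of_mul_eq_one hT₁₂) (Matrix.le_of_mul_eq_one hT₂₁)
  obtain ⟨hD, hB⟩ := eq_and_obsResolvent_mul_eq_of_transferFn_eq (h1.transferFn_eq h2)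
  have hG : obsResolvent A C * ratOf (1 : Mat d d) = obsResolvent Ah Ch * ratOf T₂ := by
    rw [ratOf_one, Matrix.mul_one, hT₂]
  refine ⟨rfl, T₂, Matrix.isUnit_det_of_left_inverse hT₁₂, ?_, ?_, ?_, hD.symm⟩ <;>
    simp only [Fin.cast_refl, Matrix.submatrix_id_id]
  · refine eq_of_obsResolvent_mul_ratOf_eq h2.1 ?_
    rw [← obsResolvent_mul_ratOf_mul_eq hG, Matrix.mul_one, ratOf_mul, ← Matrix.mul_assoc, ← hT₂]
  · refine eq_of_obsResolvent_mul_ratOf_eq h2.1 ?_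
    rw [← hB, ratOf_mul, ← Matrix.mul_assoc, ← hT₂]
  · simpa using (mul_eq_of_obsResolvent_mul_ratOf_eq hG).symm

/-- uniqueness of observable realizations up to state-space isomorphism. -/
theorem statement17 {d dh n m : ℕ}
    (A : Mat d d) (B : Mat d n) (C : Matrix (Fin m) (Fin d) ℝ) (D : Matrix (Fin m) (Fin n) ℝ)
    (Ah : Mat dh dh) (Bh : Matrix (Fin dh) (Fin n) ℝ) (Ch : Matrix (Fin m) (Fin dh) ℝ)
    (Dh : Matrix (Fin m) (Fin n) ℝ)
    (P : Matrix (Fin m) (Fin n) (Polynomial ℝ)) (Q : Matrix (Fin m) (Fin m) (Polynomial ℝ))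
    (hQ : Q.det ≠ 0) (hprop : ProperM ((ratM Q)⁻¹ * ratM P))
    (h1 : ObsRealization A B C D P Q) (h2 : ObsRealization Ah Bh Ch Dh P Q) :
    ∃ (h : d = dh) (T : Mat d d), IsUnit T.det ∧
      Ah.submatrix (Fin.cast h) (Fin.cast h) * T = T * A ∧
      Bh.submatrix (Fin.cast h) id = T * B ∧
      Ch.submatrix id (Fin.cast h) * T = C ∧
      Dh = D :=
  statement17_general A B C D Ah Bh Ch Dh P Q h1 h2

end
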